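/- Let M be a finite MTL-algebra. The poset of join-irreducible idempotent elements of M is order-isomorphic to the opposite of the poset of prime filters of M ordered by inclusion, via e ↦ ↑e. -/
import Mathlib


/-- An MTL-algebra: a bounded integral commutative prelinear residuated lattice.
The top element coincides with the monoid unit `1` (integrality), `⊥` plays the
role of `0`, `himp` is the residual `→`. -/
class MTL (α : Type*) extends CommMonoid α, Lattice α, BoundedOrder α where
  himp : α → α → α
  residuation : ∀ x y z : α, x * y ≤ z ↔ x ≤ himp y z
  one_eq_top : (1 : α) = ⊤
  prelinear : ∀ x y : α, himp x y ⊔ himp y x = 1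

/-- An MTL-algebra is archimedean if for all `x ≤ y < 1` there is `n` with `y ^ n ≤ x`. -/
def IsArchimedean (α : Type*) [MTL α] : Prop :=
  ∀ x y : α, x ≤ y → y < 1 → ∃ n : ℕ, y ^ n ≤ x

/-- A homomorphism of MTL-algebras: preserves `·`, `→`, `∧`, `∨`, `0` (= `⊥`) and `1`. -/
def IsMTLHom {α β : Type*} [MTL α] [MTL β] (f : α → β) : Prop :=
  (∀ x y, f (x * y) = f x * f y) ∧
  (∀ x y, f (MTL.himp x y) = MTL.himp (f x) (f y)) ∧
  (∀ x y, f (x ⊓ y) = f x ⊓ f y) ∧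
  (∀ x y, f (x ⊔ y) = f x ⊔ f y) ∧
  f ⊥ = ⊥ ∧ f 1 = 1

/-- A filter of an MTL-algebra: a submultiplicative upset containing `1`. -/
def IsMTLFilter {α : Type*} [MTL α] (F : Set α) : Prop :=
  (1 : α) ∈ F ∧ (∀ x y : α, x ∈ F → x ≤ y → y ∈ F) ∧
    (∀ x y : α, x ∈ F → y ∈ F → x * y ∈ F)

/-- A prime filter: a filter not containing `0` (= `⊥`) such that
`x ⊔ y ∈ F` implies `x ∈ F` or `y ∈ F`. -/
def IsPrimeMTLFilter {α : Type*} [MTL α] (F : Set α) : Prop :=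
  IsMTLFilter F ∧ (⊥ : α) ∉ F ∧ ∀ x y : α, x ⊔ y ∈ F → x ∈ F ∨ y ∈ F

/-- A join-irreducible idempotent: a nonzero idempotent `e` such that
`e ≤ a ⊔ b` implies `e ≤ a` or `e ≤ b`. -/
def IsJIIdem {α : Type*} [MTL α] (e : α) : Prop :=
  e * e = e ∧ e ≠ ⊥ ∧ ∀ a b : α, e ≤ a ⊔ b → e ≤ a ∨ e ≤ b

section Aux

variable {α : Type*} [MTL α]

private lemma mtl_le_one (x : α) : x ≤ 1 := MTL.one_eq_top (α := α) ▸ le_top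

private lemma mtl_mul_mono_left {a b : α} (c : α) (h : a ≤ b) : a * c ≤ b * c :=
  (MTL.residuation a c (b * c)).2 (le_trans h ((MTL.residuation b c (b * c)).1 le_rfl))

private lemma mtl_mul_le_left (x y : α) : x * y ≤ x := by
  calc x * y = y * x := mul_comm x y
    _ ≤ 1 * x := mtl_mul_mono_left x (mtl_le_one y)
    _ = x := one_mul x

private lemma mtl_mul_le_right (x y : α) : x * y ≤ y := by
  rw [mul_comm]; exact mtl_mul_le_left y x

end Aux

/-- In a finite MTL-algebra, `e ↦ ↑e` is an order isomorphism from the poset of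
join-irreducible idempotents onto the opposite of the poset of prime filters:
it maps join-irreducible idempotents to prime filters, every prime filter is
`↑e` for a unique join-irreducible idempotent `e`, and the map is order reversing
in both directions. -/
theorem ji_idem_order_iso_spec_op {α : Type*} [MTL α] [Fintype α] :
    (∀ e : α, IsJIIdem e → IsPrimeMTLFilter (Set.Ici e)) ∧
    (∀ P : Set α, IsPrimeMTLFilter P → ∃! e : α, IsJIIdem e ∧ P = Set.Ici e) ∧
    (∀ e f : α, IsJIIdem e → IsJIIdem f → (e ≤ f ↔ Set.Ici f ⊆ Set.Ici e)) := by
  refine ⟨?_, ?_, ?_⟩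
  · rintro e ⟨hidem, hne, hji⟩
    refine ⟨⟨mtl_le_one e, fun x y hx hxy => le_trans hx hxy, fun x y hx hy => ?_⟩, ?_, ?_⟩
    · calc e = e * e := hidem.symm
        _ ≤ x * e := mtl_mul_mono_left e hx
        _ ≤ x * y := by rw [mul_comm x e, mul_comm x y]; exact mtl_mul_mono_left x hy
    · intro h
      exact hne (le_antisymm h bot_le)
    · exact hji
  · rintro P ⟨⟨h1, hup, hmul⟩, hbot, hprime⟩
    classical
    set s : Finset α := P.toFinset with hs
    set e : α := ∏ x ∈ s, x with he
    have heP : e ∈ P := by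
      rw [he]
      refine Finset.prod_induction id (· ∈ P) (fun a b ha hb => hmul a b ha hb) h1 ?_
      intro x hx; exact Set.mem_toFinset.1 hx
    have hle : ∀ x ∈ P, e ≤ x := by
      intro x hx
      have hxs : x ∈ s := Set.mem_toFinset.2 hx
      calc e = x * ∏ y ∈ s.erase x, y := (Finset.mul_prod_erase s id hxs).symm
        _ ≤ x := mtl_mul_le_left _ _
    have hPIci : P = Set.Ici e := by
      ext x
      constructor
      · exact fun hx => hle x hx
      · exact fun hx => hup e x heP hx
    have hJI : IsJIIdem e := by
      refine ⟨?_, ?_, ?_⟩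
      · exact le_antisymm (mtl_mul_le_left e e) (hle _ (hmul e e heP heP))
      · intro h; exact hbot (h ▸ heP)
      · intro a b hab
        have : a ⊔ b ∈ P := hup e _ heP hab
        rcases hprime a b this with h | h
        · exact Or.inl (hle a h)
        · exact Or.inr (hle b h)
    refine ⟨e, ⟨hJI, hPIci⟩, ?_⟩
    rintro f ⟨hf, hPf⟩
    have h1 : f ∈ Set.Ici e := hPIci ▸ hPf ▸ Set.self_mem_Ici (a := f)
    have h2 : e ∈ Set.Ici f := hPf ▸ hPIci ▸ Set.self_mem_Ici (a := e)
    exact le_antisymm h2 h1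
  · intro e f _ _
    constructor
    · intro h x hx; exact le_trans h hx
    · intro h; exact h (Set.self_mem_Ici)
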